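/- arXiv:1611.00981 — 4 statements merged into one kernel-verified Lean document; each statement's English description precedes it below -/
import Mathlib

section
/- Let l ≥ 2 and n ≥ 2l + 3, and let G be a simple graph on n vertices which is not isomorphic to K_{2l+3} ∪ M_{n-2l-3} and satisfies e(G) ≥ C(2l+3,2) + ⌊(n-2l-3)/2⌋. If G contains a cycle on 2l+2 vertices or a cycle on 2l+3 vertices, then G contains P_{2l+1} ∪ P_3, i.e. two vertex-disjoint paths on 2l+1 and 3 vertices respectively. -/
/-!
Let `C` be the vertex set of the given cycle. A path on `2l + 1` vertices running along the cycle,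
together with a cherry `x - y - z` avoiding it, is a copy of `P_{2l+1} ∪ P_3`; so in a
counterexample every cherry meets each such path.

If `|C| = 2l + 3`, a `(2l+1)`-path fits after any two consecutive cycle vertices, so no edge
leaves `C`, and no vertex outside `C` has two neighbours. Thus `G` is a graph on `C` plus a
matching, and the edge bound forces `C` to be a clique and the matching to miss at most one
vertex: `G ≅ K_{2l+3} ∪ M_{n-2l-3}`.

If `|C| = 2l + 2` and `G` has no `C_{2l+3}`, then every vertex has at most one neighbour outside
`C`, and two consecutive cycle vertices never both have one (a common neighbour would extend `C`
to a `C_{2l+3}`, distinct ones give the forbidden pair of paths). So at most `l + 1` edges leave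
`C`, and `2 e(G) ≤ (2l+2)(2l+1) + 2(l+1) + (n-2l-2)`, which contradicts the edge bound when
`l ≥ 1`.
-/

open SimpleGraph Finset

/-- The quantity `[n,m,l]` from the paper: if `n ≤ m-1` it is `C(n,2)`; otherwise, writing
`n = (m-1) + t(l-1) + r` with `0 ≤ r < l-1`, it is `C(m-1,2) + t·C(l-1,2) + C(r,2)`. -/
def brkt3 (n m l : ℕ) : ℕ :=
  if n ≤ m - 1 then Nat.choose n 2
  else Nat.choose (m - 1) 2 + ((n - (m - 1)) / (l - 1)) * Nat.choose (l - 1) 2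
      + Nat.choose ((n - (m - 1)) % (l - 1)) 2

/-- The quantity `[n,m]` from the paper: `C(⌊m/2⌋-1,2) + ⌊(m-2)/2⌋·(n - ⌊m/2⌋ + 1)`. -/
def brkt2 (n m : ℕ) : ℕ :=
  Nat.choose (m / 2 - 1) 2 + ((m - 2) / 2) * (n - m / 2 + 1)

/-- The disjoint union of paths `P_{k 0} ∪ … ∪ P_{k (m-1)}`. -/
def pathUnion (m : ℕ) (k : Fin m → ℕ) : SimpleGraph (Σ i : Fin m, Fin (k i)) where
  Adj x y := x.1 = y.1 ∧ ((x.2 : ℕ) + 1 = (y.2 : ℕ) ∨ (y.2 : ℕ) + 1 = (x.2 : ℕ))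
  symm := ⟨by rintro x y ⟨h1, h2⟩; exact ⟨h1.symm, h2.symm⟩⟩
  loopless := ⟨by rintro x ⟨-, h⟩; omega⟩

/-- `G` contains a copy of `H` as a subgraph. -/
def ContainsSub {V W : Type*} (G : SimpleGraph V) (H : SimpleGraph W) : Prop :=
  ∃ f : W ↪ V, ∀ a b, H.Adj a b → G.Adj (f a) (f b)

/-- The Turán number `ex(n,H)`: the maximum number of edges of a simple graph on `n`
vertices containing no subgraph isomorphic to `H`. -/
noncomputable def exNum (n : ℕ) {W : Type*} (H : SimpleGraph W) : ℕ :=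
  sSup {e : ℕ | ∃ G : SimpleGraph (Fin n), ¬ ContainsSub G H ∧ G.edgeSet.ncard = e}

/-- The connected Turán number `ex_con(n,H)`: the maximum number of edges of a connected
simple graph on `n` vertices containing no subgraph isomorphic to `H`. -/
noncomputable def exConNum (n : ℕ) {W : Type*} (H : SimpleGraph W) : ℕ :=
  sSup {e : ℕ | ∃ G : SimpleGraph (Fin n),
    G.Connected ∧ ¬ ContainsSub G H ∧ G.edgeSet.ncard = e}

/-- The graph `K_m ∪ M_{n-m}` on `Fin n`: a complete graph on the first `m` vertices
together with a maximum matching on the remaining `n - m` vertices. -/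
def compPlusMatching (n m : ℕ) : SimpleGraph (Fin n) where
  Adj a b := a ≠ b ∧
    (((a : ℕ) < m ∧ (b : ℕ) < m) ∨
     (m ≤ (a : ℕ) ∧ m ≤ (b : ℕ) ∧ ((a : ℕ) - m) / 2 = ((b : ℕ) - m) / 2))
  symm := ⟨by rintro a b ⟨h1, h2⟩; exact ⟨h1.symm, by tauto⟩⟩
  loopless := ⟨by rintro a ⟨h, -⟩; exact h rfl⟩

/-- The graph `K_l + (K_2 ∪ K̄_{n-l-2})` on `Fin n`. -/
def joinK2Empty (n l : ℕ) : SimpleGraph (Fin n) where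
  Adj a b := a ≠ b ∧ ((a : ℕ) < l ∨ (b : ℕ) < l ∨ ((a : ℕ) < l + 2 ∧ (b : ℕ) < l + 2))
  symm := ⟨by rintro a b ⟨h1, h2⟩; exact ⟨h1.symm, by tauto⟩⟩
  loopless := ⟨by rintro a ⟨h, -⟩; exact h rfl⟩

theorem sum_range_two_mul_le {f : ℕ → ℕ} (hf : ∀ i, f i ≤ 1)
    (h : ∀ i, f i ≠ 0 → f (i + 1) = 0) (a : ℕ) : ∑ i ∈ range (2 * a), f i ≤ a := by
  induction a with
  | zero => simp
  | succ a ih =>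
    rw [show 2 * (a + 1) = 2 * a + 1 + 1 by ring, sum_range_succ, sum_range_succ]
    have := hf (2 * a)
    have := hf (2 * a + 1)
    have := h (2 * a)
    omega

namespace SimpleGraph

section Paths

variable {V : Type*} {G : SimpleGraph V}

def IsIndexedPath (G : SimpleGraph V) (k : ℕ) (f : ℕ → V) : Prop :=
  Set.InjOn f (Set.Iio k) ∧ ∀ i, i + 1 < k → G.Adj (f i) (f (i + 1))

theorem containsSub_pathUnion_two {p q : ℕ} {a b : ℕ → V} (ha : IsIndexedPath G p a)
    (hb : IsIndexedPath G q b) (hab : ∀ i < p, ∀ j < q, a i ≠ b j) :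
    ContainsSub G (pathUnion 2 ![p, q]) := by
  let f : (Σ i : Fin 2, Fin (![p, q] i)) → V := fun x => if x.1 = 0 then a x.2 else b x.2
  refine ⟨⟨f, ?_⟩, ?_⟩
  · rintro ⟨i, x⟩ ⟨j, y⟩ h
    have hx := x.isLt
    have hy := y.isLt
    fin_cases i <;> fin_cases j <;>
      simp only [Nat.succ_eq_add_one, Nat.reduceAdd, Fin.isValue, Fin.zero_eta, Fin.mk_one,
        ↓reduceIte, one_ne_zero, zero_ne_one, Matrix.cons_val_zero, Matrix.cons_val_one,
        Matrix.cons_val_fin_one, Sigma.mk.injEq, true_and, false_and, f] at h hx hy ⊢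
    · exact heq_of_eq (Fin.ext (ha.1 hx hy h))
    · exact hab _ hx _ hy h
    · exact hab _ hy _ hx h.symm
    · exact heq_of_eq (Fin.ext (hb.1 hx hy h))
  · rintro ⟨i, x⟩ ⟨j, y⟩ ⟨rfl, hxy⟩
    have hx := x.isLt
    have hy := y.isLt
    fin_cases i <;>
      simp only [Nat.succ_eq_add_one, Nat.reduceAdd, Fin.isValue, Fin.zero_eta, Fin.mk_one,
        ↓reduceIte, one_ne_zero, Matrix.cons_val_zero, Matrix.cons_val_one,
        Matrix.cons_val_fin_one, Function.Embedding.coeFn_mk, f] at hx hy hxy ⊢ <;>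
      rcases hxy with h | h
    · exact h ▸ ha.2 _ (h ▸ hy)
    · exact h ▸ (ha.2 _ (h ▸ hx)).symm
    · exact h ▸ hb.2 _ (h ▸ hy)
    · exact h ▸ (hb.2 _ (h ▸ hx)).symm

theorem containsSub_pathUnion_cherry {k : ℕ} {a : ℕ → V} {x y z : V}
    (ha : IsIndexedPath G k a) (hxy : G.Adj x y) (hyz : G.Adj y z) (hxz : x ≠ z)
    (hx : ∀ i < k, a i ≠ x) (hy : ∀ i < k, a i ≠ y) (hz : ∀ i < k, a i ≠ z) :
    ContainsSub G (pathUnion 2 ![k, 3]) := by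
  refine containsSub_pathUnion_two (b := fun j => if j = 0 then x else if j = 1 then y else z)
    ha ⟨fun i hi j hj h => ?_, fun i hi => ?_⟩ fun i hi j hj => ?_
  · simp only [Set.mem_Iio] at hi hj
    interval_cases i <;> interval_cases j <;> simp_all [hxy.ne, hyz.ne, hyz.ne.symm]
  · obtain rfl | rfl : i = 0 ∨ i = 1 := by omega
    · simpa using hxy
    · simpa using hyz
  · interval_cases j <;> simp [hx i hi, hy i hi, hz i hi]

theorem cycleGraph_adj_iff_val {m : ℕ} (hm : 2 ≤ m) {u v : Fin m} :
    (cycleGraph m).Adj u v ↔ (u : ℕ) + 1 = v ∨ (v : ℕ) + 1 = u ∨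
      ((u : ℕ) + 1 = m ∧ (v : ℕ) = 0) ∨ ((v : ℕ) + 1 = m ∧ (u : ℕ) = 0) := by
  have key : ∀ a b : Fin m, ((a - b : Fin m) : ℕ) = 1 ↔
      (b : ℕ) + 1 = a ∨ ((a : ℕ) = 0 ∧ (b : ℕ) + 1 = m) := by
    intro a b
    have := b.isLt
    rcases le_or_gt b a with h | h
    · rw [Fin.coe_sub_iff_le.mpr h]
      have := Fin.le_def.mp h
      omega
    · rw [Fin.coe_sub_iff_lt.mpr h]
      have := Fin.lt_def.mp h
      omega
  rw [cycleGraph_adj', key, key]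
  omega

def IsCycleMap (G : SimpleGraph V) (m : ℕ) (c : ℕ → V) : Prop :=
  (∀ i, G.Adj (c i) (c (i + 1))) ∧ ∀ i j, c i = c j ↔ i % m = j % m

theorem exists_isCycleMap {m : ℕ} (hm : 2 ≤ m) (h : ContainsSub G (cycleGraph m)) :
    ∃ c, IsCycleMap G m c := by
  obtain ⟨e, he⟩ := h
  have hm0 : 0 < m := by omega
  refine ⟨fun i => e ⟨i % m, Nat.mod_lt i hm0⟩, fun i => he _ _ ?_, fun i j => ?_⟩
  · have hi := Nat.mod_lt i hm0
    simp only [cycleGraph_adj_iff_val hm]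
    rw [Nat.add_mod_eq_ite, Nat.mod_eq_of_lt (by omega : 1 < m)]
    split_ifs <;> omega
  · simp [Fin.ext_iff]

theorem containsSub_cycleGraph {m : ℕ} (hm : 2 ≤ m) {f : ℕ → V} (hf : IsIndexedPath G m f)
    (hclose : G.Adj (f (m - 1)) (f 0)) : ContainsSub G (cycleGraph m) := by
  refine ⟨⟨fun i => f i, fun i j h => Fin.ext (hf.1 i.isLt j.isLt h)⟩, fun i j hij => ?_⟩
  have hi := i.isLt
  have hj := j.isLt
  rw [cycleGraph_adj_iff_val hm] at hij
  show G.Adj (f i) (f j)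
  rcases hij with h | h | ⟨h1, h2⟩ | ⟨h1, h2⟩
  · exact h ▸ hf.2 _ (by omega)
  · exact (h ▸ hf.2 _ (by omega)).symm
  · rw [h2, show (i : ℕ) = m - 1 by omega]; exact hclose
  · rw [h2, show (j : ℕ) = m - 1 by omega]; exact hclose.symm

namespace IsCycleMap

variable {m : ℕ} {c : ℕ → V}

theorem apply_add_self (hc : IsCycleMap G m c) (i : ℕ) : c (i + m) = c i :=
  (hc.2 _ _).2 (Nat.add_mod_right i m)

theorem apply_eq_apply_iff (hc : IsCycleMap G m c) {i j : ℕ} (hij : i ≤ j) (hj : j < i + m) :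
    c i = c j ↔ i = j := by
  refine ⟨fun h => ?_, fun h => h ▸ rfl⟩
  obtain ⟨d, rfl⟩ := Nat.exists_eq_add_of_le hij
  have hd : d ≡ 0 [MOD m] := Nat.ModEq.add_left_cancel' i ((hc.2 _ _).1 h).symm
  rw [Nat.ModEq, Nat.zero_mod, Nat.mod_eq_of_lt (by omega)] at hd
  omega

theorem apply_ne_apply (hc : IsCycleMap G m c) {i j : ℕ} (hne : i ≠ j) (hij : i < j + m)
    (hji : j < i + m) : c i ≠ c j := by
  rcases le_total i j with h | h
  · exact fun hc' => hne ((hc.apply_eq_apply_iff h hji).1 hc')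
  · exact fun hc' => hne ((hc.apply_eq_apply_iff h hij).1 hc'.symm).symm

theorem isIndexedPath (hc : IsCycleMap G m c) (s : ℕ) {k : ℕ} (hk : k ≤ m) :
    IsIndexedPath G k (fun t => c (s + t)) := by
  refine ⟨fun t ht t' ht' h => ?_, fun t _ => by simpa [add_assoc] using hc.1 (s + t)⟩
  simp only [Set.mem_Iio] at ht ht'
  by_contra hne
  exact hc.apply_ne_apply (by omega : s + t ≠ s + t') (by omega) (by omega) h

theorem isIndexedPath_cons (hc : IsCycleMap G m c) {u : V} (hu : u ∉ Set.range c) {j : ℕ}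
    (hadj : G.Adj u (c (j + 1))) {k : ℕ} (hk : k ≤ m + 1) :
    IsIndexedPath G k (fun t => if t = 0 then u else c (j + t)) := by
  refine ⟨fun t ht t' ht' h => ?_, fun t _ => ?_⟩
  · simp only [Set.mem_Iio] at ht ht'
    by_contra hne
    simp only at h
    split_ifs at h with h0 h0'
    · omega
    · exact hu ⟨_, h.symm⟩
    · exact hu ⟨_, h⟩
    · exact hc.apply_ne_apply (by omega : j + t ≠ j + t') (by omega) (by omega) h
  · rcases Nat.eq_zero_or_pos t with rfl | ht
    · simpa using hadj
    · simpa [ht.ne', add_assoc] using hc.1 (j + t)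

theorem mem_image_range_iff [DecidableEq V] (hc : IsCycleMap G m c) (hm : 0 < m) {v : V} :
    v ∈ (range m).image c ↔ v ∈ Set.range c := by
  refine ⟨fun h => ?_, fun ⟨i, hi⟩ => mem_image.2 ⟨i % m, mem_range.2 (Nat.mod_lt _ hm), ?_⟩⟩
  · obtain ⟨i, -, hi⟩ := mem_image.1 h
    exact ⟨i, hi⟩
  · exact hi ▸ (hc.2 _ _).2 (Nat.mod_mod _ _)

theorem injOn_range (hc : IsCycleMap G m c) : Set.InjOn c (range m) := by
  intro i hi j hj h
  simp only [coe_range, Set.mem_Iio] at hi hj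
  by_contra hne
  exact hc.apply_ne_apply hne (by omega) (by omega) h

theorem card_image_range [DecidableEq V] (hc : IsCycleMap G m c) : #((range m).image c) = m := by
  rw [card_image_of_injOn hc.injOn_range, card_range]

variable {k : ℕ}

theorem eq_of_adj_of_notMem_range (hc : IsCycleMap G m c)
    (hT : ¬ ContainsSub G (pathUnion 2 ![k, 3])) (hk : k ≤ m) {v x y : V}
    (hv : v ∉ Set.range c) (hx : x ∉ Set.range c) (hy : y ∉ Set.range c)
    (hvx : G.Adj v x) (hvy : G.Adj v y) : x = y := by
  by_contra hxy
  exact hT <| containsSub_pathUnion_cherry (hc.isIndexedPath 0 hk) hvx.symm hvy hxy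
    (fun _ _ h => hx ⟨_, h⟩) (fun _ _ h => hv ⟨_, h⟩) (fun _ _ h => hy ⟨_, h⟩)

theorem eq_of_adj_apply_of_notMem_range (hc : IsCycleMap G m c)
    (hT : ¬ ContainsSub G (pathUnion 2 ![k, 3])) (hk : k + 1 ≤ m) {i : ℕ} {x y : V}
    (hx : x ∉ Set.range c) (hy : y ∉ Set.range c) (hix : G.Adj (c i) x) (hiy : G.Adj (c i) y) :
    x = y := by
  by_contra hxy
  exact hT <| containsSub_pathUnion_cherry (hc.isIndexedPath (i + 1) (by omega)) hix.symm hiy hxy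
    (fun _ _ h => hx ⟨_, h⟩) (fun _ _ => hc.apply_ne_apply (by omega) (by omega) (by omega))
    (fun _ _ h => hy ⟨_, h⟩)

theorem mem_range_of_adj_apply (hc : IsCycleMap G m c)
    (hT : ¬ ContainsSub G (pathUnion 2 ![k, 3])) (hk : k + 2 ≤ m) {i : ℕ} {u : V}
    (hu : G.Adj (c i) u) : u ∈ Set.range c := by
  by_contra hu'
  exact hT <| containsSub_pathUnion_cherry (hc.isIndexedPath (i + 2) (by omega)) hu.symm (hc.1 i)
    (fun h => hu' ⟨_, h.symm⟩) (fun _ _ h => hu' ⟨_, h⟩)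
    (fun _ _ => hc.apply_ne_apply (by omega) (by omega) (by omega))
    (fun _ _ => hc.apply_ne_apply (by omega) (by omega) (by omega))

theorem eq_of_adj_apply_of_adj_apply_succ (hc : IsCycleMap G m c)
    (hT : ¬ ContainsSub G (pathUnion 2 ![k, 3])) (hk : k + 1 ≤ m) {j : ℕ} {u v : V}
    (hu : u ∉ Set.range c) (hv : v ∉ Set.range c) (hju : G.Adj (c j) u)
    (hjv : G.Adj (c (j + 1)) v) : u = v := by
  by_contra huv
  have hback : G.Adj (c j) (c (j + (m - 1))) := by
    have := hc.1 (j + (m - 1))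
    rwa [show j + (m - 1) + 1 = j + m by omega, hc.apply_add_self, adj_comm] at this
  -- the path `v, c (j + 1), …, c (j + k - 1)` and the cherry `u - c j - c (j + m - 1)`
  refine hT <| containsSub_pathUnion_cherry (hc.isIndexedPath_cons hv hjv.symm (k := k)
    (by omega)) hju.symm hback (fun h => hu ⟨_, h.symm⟩) ?_ ?_ ?_ <;> intro t ht <;>
    split_ifs
  · exact Ne.symm huv
  · exact fun h => hu ⟨_, h⟩
  · exact fun h => hv ⟨_, h.symm⟩
  · exact hc.apply_ne_apply (by omega) (by omega) (by omega)
  · exact fun h => hv ⟨_, h.symm⟩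
  · exact hc.apply_ne_apply (by omega) (by omega) (by omega)

theorem containsSub_cycleGraph_succ (hc : IsCycleMap G m c) (hm : 0 < m) {j : ℕ} {u : V}
    (hu : u ∉ Set.range c) (hju : G.Adj (c j) u) (hju' : G.Adj (c (j + 1)) u) :
    ContainsSub G (cycleGraph (m + 1)) :=
  containsSub_cycleGraph (by omega) (hc.isIndexedPath_cons hu hju'.symm le_rfl)
    (by simpa [show m ≠ 0 by omega, hc.apply_add_self] using hju)

end IsCycleMap

end Paths

section Counting

variable {V : Type*} [Fintype V] [DecidableEq V] {G : SimpleGraph V} [DecidableRel G.Adj]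

theorem card_neighborFinset_inter_le {C : Finset V} {v : V} (hv : v ∈ C) :
    #(G.neighborFinset v ∩ C) ≤ #C - 1 := by
  rw [← card_erase_of_mem hv]
  refine card_le_card fun w hw => ?_
  rw [mem_inter, mem_neighborFinset] at hw
  exact mem_erase.2 ⟨hw.1.ne', hw.2⟩

theorem sum_card_neighborFinset_inter_compl (C : Finset V) :
    ∑ v ∈ Cᶜ, #(G.neighborFinset v ∩ C) = ∑ v ∈ C, #(G.neighborFinset v \ C) := by
  have := sum_card_bipartiteAbove_eq_sum_card_bipartiteBelow (s := C) (t := Cᶜ) (r := G.Adj)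
  convert this.symm using 3 with v _ v _
  · ext w
    simp [bipartiteBelow, adj_comm, and_comm]
  · ext w
    simp [bipartiteAbove, and_comm]

theorem two_mul_card_edgeFinset_le (C : Finset V)
    (hR : ∀ v ∉ C, #(G.neighborFinset v \ C) ≤ 1) :
    2 * #G.edgeFinset ≤
      #C * (#C - 1) + 2 * ∑ v ∈ C, #(G.neighborFinset v \ C) + (Fintype.card V - #C) := by
  have hsplit : ∀ v, G.degree v = #(G.neighborFinset v ∩ C) + #(G.neighborFinset v \ C) :=
    fun v => by rw [← card_neighborFinset_eq_degree, card_inter_add_card_sdiff]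
  have hC : ∑ v ∈ C, G.degree v ≤ #C * (#C - 1) + ∑ v ∈ C, #(G.neighborFinset v \ C) := by
    simp only [hsplit, sum_add_distrib, add_le_add_iff_right]
    simpa using sum_le_card_nsmul C _ _ fun v hv => card_neighborFinset_inter_le (G := G) hv
  have hCc : ∑ v ∈ Cᶜ, G.degree v ≤ ∑ v ∈ C, #(G.neighborFinset v \ C) + #Cᶜ := by
    simp only [hsplit, sum_add_distrib, sum_card_neighborFinset_inter_compl, add_le_add_iff_left]
    simpa using sum_le_card_nsmul Cᶜ _ 1 fun v hv => hR v (mem_compl.1 hv)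
  rw [← sum_degrees_eq_twice_card_edges, ← sum_add_sum_compl C]
  rw [card_compl] at hCc
  omega

end Counting

theorem nonempty_iso_of_adj_iff_label {V W γ : Type*} [Fintype V] [Fintype W] [DecidableEq γ]
    {G : SimpleGraph V} {H : SimpleGraph W} (f : V → γ) (g : W → γ)
    (hG : ∀ u v, G.Adj u v ↔ u ≠ v ∧ f u = f v)
    (hH : ∀ u v, H.Adj u v ↔ u ≠ v ∧ g u = g v)
    (hfg : ∀ c, Fintype.card {v // f v = c} = Fintype.card {w // g w = c}) :
    Nonempty (G ≃g H) := by
  let σ : V ≃ W := Equiv.ofFiberEquiv fun c => Fintype.equivOfCardEq (hfg c)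
  have hσ : ∀ v, g (σ v) = f v := Equiv.ofFiberEquiv_map _
  refine ⟨⟨σ, fun {u v} => ?_⟩⟩
  rw [hG, hH, σ.injective.ne_iff, hσ, hσ]

section CliqueMatching

variable {V : Type*} [Fintype V] [DecidableEq V]

structure IsCliqueMatching (G : SimpleGraph V) (C : Finset V) (p : V → V) : Prop where
  mapsTo : ∀ v ∉ C, p v ∉ C
  involutive : ∀ v ∉ C, p (p v) = v
  adj_iff : ∀ u v, G.Adj u v ↔ u ≠ v ∧ (u ∈ C ∧ v ∈ C ∨ u ∉ C ∧ v = p u)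

def pairBlocks (C : Finset V) (p : V → V) : Finset (Finset V) :=
  (Cᶜ.image fun v => ({v, p v} : Finset V)).filter (#· = 2)

def unmatched (C : Finset V) (p : V → V) : Finset V :=
  Cᶜ.filter fun v => p v = v

/-- Label `0` is the clique `C`, labels `1, …, #(pairBlocks C p)` are the matching edges and the
last label is the unmatched vertices; adjacency becomes "distinct with equal label", so any
label-preserving bijection between two such graphs is an isomorphism. -/
noncomputable def blockLabel (C : Finset V) (p : V → V) (v : V) : ℕ :=
  if v ∈ C then 0
  else if h : {v, p v} ∈ pairBlocks C p then ((pairBlocks C p).equivFin ⟨_, h⟩ : ℕ) + 1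
  else #(pairBlocks C p) + 1

variable {C : Finset V} {p : V → V}

theorem pair_mem_pairBlocks_iff {v : V} (hv : v ∉ C) :
    {v, p v} ∈ pairBlocks C p ↔ p v ≠ v := by
  refine ⟨fun h hpv => ?_, fun h => mem_filter.2 ⟨mem_image.2 ⟨v, mem_compl.2 hv, rfl⟩,
    card_pair (Ne.symm h)⟩⟩
  have := (mem_filter.1 h).2
  simp [hpv] at this

theorem mem_iff_of_mem_pairBlocks (hmaps : ∀ v ∉ C, p v ∉ C) (hinv : ∀ v ∉ C, p (p v) = v)
    {b : Finset V} (hb : b ∈ pairBlocks C p) {v : V} : v ∈ b ↔ v ∉ C ∧ {v, p v} = b := by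
  obtain ⟨w, hw, rfl⟩ := mem_image.1 (mem_filter.1 hb).1
  rw [mem_compl] at hw
  refine ⟨fun hv => ?_, fun ⟨_, h⟩ => h ▸ mem_insert_self v _⟩
  rcases mem_insert.1 hv with rfl | hv
  · exact ⟨hw, rfl⟩
  · rw [mem_singleton.1 hv, hinv w hw, pair_comm]
    exact ⟨hmaps w hw, rfl⟩

theorem blockLabel_eq_zero_iff {v : V} : blockLabel C p v = 0 ↔ v ∈ C := by
  unfold blockLabel
  split_ifs <;> simp_all

theorem blockLabel_lt (v : V) : blockLabel C p v < #(pairBlocks C p) + 2 := by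
  unfold blockLabel
  split_ifs
  · omega
  · have := ((pairBlocks C p).equivFin ⟨_, ‹_›⟩).isLt
    omega
  · omega

theorem blockLabel_eq_succ_iff (hmaps : ∀ v ∉ C, p v ∉ C) (hinv : ∀ v ∉ C, p (p v) = v)
    {j : ℕ} (hj : j < #(pairBlocks C p)) {v : V} :
    blockLabel C p v = j + 1 ↔ v ∈ ((pairBlocks C p).equivFin.symm ⟨j, hj⟩ : Finset V) := by
  have hb := ((pairBlocks C p).equivFin.symm ⟨j, hj⟩).2
  rw [mem_iff_of_mem_pairBlocks hmaps hinv hb]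
  unfold blockLabel
  split_ifs with hv h
  · simp [hv]
  · have hval : ∀ x : Fin _, (x : ℕ) = j ↔ x = ⟨j, hj⟩ := fun x => (Fin.ext_iff (b := ⟨j, hj⟩)).symm
    rw [add_left_inj, hval, ← Equiv.eq_symm_apply, Subtype.ext_iff]
    simp [hv]
  · refine ⟨fun h' => by omega, fun ⟨_, h'⟩ => absurd (h' ▸ hb) h⟩

theorem blockLabel_eq_card_add_one_iff {v : V} :
    blockLabel C p v = #(pairBlocks C p) + 1 ↔ v ∈ unmatched C p := by
  unfold blockLabel unmatched
  split_ifs with hv h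
  · simp [hv]
  · have := ((pairBlocks C p).equivFin ⟨_, h⟩).isLt
    simp only [add_left_inj, mem_filter, mem_compl, hv, not_false_eq_true, true_and]
    exact ⟨fun h' => by omega, fun h' => absurd h' ((pair_mem_pairBlocks_iff hv).1 h)⟩
  · simpa [hv] using (pair_mem_pairBlocks_iff hv).not.1 h

theorem card_filter_blockLabel_eq (hmaps : ∀ v ∉ C, p v ∉ C) (hinv : ∀ v ∉ C, p (p v) = v)
    (j : ℕ) : #{v | blockLabel C p v = j} =
      if j = 0 then #C else if j ≤ #(pairBlocks C p) then 2
      else if j = #(pairBlocks C p) + 1 then #(unmatched C p) else 0 := by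
  rcases j with _ | j
  · simp only [blockLabel_eq_zero_iff, filter_mem_eq_inter, univ_inter, if_true]
  simp only [Nat.add_eq_zero_iff, one_ne_zero, and_false, if_false, Nat.add_one_le_iff,
    add_left_inj]
  split_ifs with hj hj'
  · have hb := ((pairBlocks C p).equivFin.symm ⟨j, hj⟩).2
    simp only [blockLabel_eq_succ_iff hmaps hinv hj, filter_mem_eq_inter, univ_inter]
    exact (mem_filter.1 hb).2
  · simp only [hj', blockLabel_eq_card_add_one_iff, filter_mem_eq_inter, univ_inter]
  · rw [card_eq_zero, filter_eq_empty_iff]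
    intro v _ hv
    have := blockLabel_lt (C := C) (p := p) v
    omega

theorem card_eq_add_card_pairBlocks_add_card_unmatched (hmaps : ∀ v ∉ C, p v ∉ C)
    (hinv : ∀ v ∉ C, p (p v) = v) :
    Fintype.card V = #C + 2 * #(pairBlocks C p) + #(unmatched C p) := by
  rw [← card_univ, card_eq_sum_card_fiberwise (f := blockLabel C p)
    (t := range (#(pairBlocks C p) + 2)) fun v _ => mem_range.2 (blockLabel_lt v)]
  simp only [card_filter_blockLabel_eq hmaps hinv]
  rw [sum_range_succ, sum_range_succ', sum_congr rfl fun i hi =>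
    (if_neg i.succ_ne_zero).trans (if_pos (Nat.succ_le_of_lt (mem_range.1 hi)))]
  rw [if_pos rfl, if_neg (Nat.succ_ne_zero _), if_neg (by omega), if_pos rfl, sum_const,
    card_range, smul_eq_mul]
  ring

theorem blockLabel_partner (hmaps : ∀ v ∉ C, p v ∉ C) (hinv : ∀ v ∉ C, p (p v) = v) {v : V}
    (hv : v ∉ C) : blockLabel C p (p v) = blockLabel C p v := by
  simp only [blockLabel, if_neg hv, if_neg (hmaps v hv), hinv v hv, pair_comm (p v) v]

theorem blockLabel_eq_blockLabel_iff (hmaps : ∀ v ∉ C, p v ∉ C) (hinv : ∀ v ∉ C, p (p v) = v)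
    (hU : #(unmatched C p) ≤ 1) {u v : V} (hu : u ∉ C) (hv : v ∉ C) :
    blockLabel C p u = blockLabel C p v ↔ v = u ∨ v = p u := by
  refine ⟨fun h => ?_, ?_⟩
  · by_cases hpu : p u = u
    · have hu' : u ∈ unmatched C p := mem_filter.2 ⟨mem_compl.2 hu, hpu⟩
      rw [← blockLabel_eq_card_add_one_iff, h, blockLabel_eq_card_add_one_iff] at hu'
      exact .inl (card_le_one.1 hU _ hu' _ (mem_filter.2 ⟨mem_compl.2 hu, hpu⟩))
    · obtain ⟨j, hj, hlabel⟩ :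
          ∃ j, ∃ hj : j < #(pairBlocks C p), blockLabel C p u = j + 1 := by
        have h0 := (blockLabel_eq_zero_iff (p := p)).not.2 hu
        have h1 := (blockLabel_eq_card_add_one_iff (C := C)).not.2 fun h' =>
          hpu (mem_filter.1 h').2
        have := blockLabel_lt (C := C) (p := p) u
        exact ⟨blockLabel C p u - 1, by omega, by omega⟩
      have hb := ((pairBlocks C p).equivFin.symm ⟨j, hj⟩).2
      have hub := (blockLabel_eq_succ_iff hmaps hinv hj).1 hlabel
      have hvb := (blockLabel_eq_succ_iff hmaps hinv hj).1 (h ▸ hlabel)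
      rw [mem_iff_of_mem_pairBlocks hmaps hinv hb] at hub
      rw [← hub.2] at hvb
      simpa using hvb
  · rintro (rfl | rfl)
    · rfl
    · exact (blockLabel_partner hmaps hinv hu).symm

theorem IsCliqueMatching.adj_iff_blockLabel {G : SimpleGraph V} (hG : IsCliqueMatching G C p)
    (hU : #(unmatched C p) ≤ 1) (u v : V) :
    G.Adj u v ↔ u ≠ v ∧ blockLabel C p u = blockLabel C p v := by
  rw [hG.adj_iff]
  have hC : ∀ w, blockLabel C p w = 0 ↔ w ∈ C := fun w => blockLabel_eq_zero_iff
  by_cases hu : u ∈ C <;> by_cases hv : v ∈ C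
  · simp [hu, hv, (hC u).2 hu, (hC v).2 hv]
  · simp [hu, hv, (hC u).2 hu, Ne.symm ((hC v).not.2 hv)]
  · simp only [hu, hv, (hC v).2 hv, (hC u).not.2 hu, false_and, not_false_eq_true, true_and,
      false_or, and_false, iff_false, not_and]
    exact fun _ h => hG.mapsTo u hu (h ▸ hv)
  · rw [blockLabel_eq_blockLabel_iff hG.mapsTo hG.involutive hU hu hv]
    simp only [hu, hv, false_and, not_false_eq_true, true_and, false_or]
    tauto

theorem nonempty_iso_of_isCliqueMatching {W : Type*} [Fintype W] [DecidableEq W]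
    {G : SimpleGraph V} {H : SimpleGraph W} {D : Finset W} {q : W → W}
    (hG : IsCliqueMatching G C p) (hH : IsCliqueMatching H D q) (hU : #(unmatched C p) ≤ 1)
    (hU' : #(unmatched D q) ≤ 1) (hCD : #C = #D) (hcard : Fintype.card V = Fintype.card W) :
    Nonempty (G ≃g H) := by
  have hV := card_eq_add_card_pairBlocks_add_card_unmatched hG.mapsTo hG.involutive
  have hW := card_eq_add_card_pairBlocks_add_card_unmatched hH.mapsTo hH.involutive
  have hB : #(pairBlocks C p) = #(pairBlocks D q) := by omega
  have hUU : #(unmatched C p) = #(unmatched D q) := by omega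
  refine nonempty_iso_of_adj_iff_label _ _ (hG.adj_iff_blockLabel hU)
    (hH.adj_iff_blockLabel hU') fun j => ?_
  rw [Fintype.card_subtype, Fintype.card_subtype,
    card_filter_blockLabel_eq hG.mapsTo hG.involutive,
    card_filter_blockLabel_eq hH.mapsTo hH.involutive, hCD, hB, hUU]

theorem exists_isCliqueMatching_compPlusMatching (n m : ℕ) :
    ∃ p, IsCliqueMatching (compPlusMatching n m) {a | (a : ℕ) < m} p ∧
      #(unmatched {a : Fin n | (a : ℕ) < m} p) ≤ 1 := by
  -- `p` pairs `m + 2i` with `m + 2i + 1` and fixes the last vertex when `n - m` is odd.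
  obtain ⟨p, hp⟩ : ∃ p : Fin n → Fin n, ∀ a : Fin n, m ≤ (a : ℕ) →
      ((p a : ℕ) = a + 1 ∧ ((a : ℕ) - m) % 2 = 0 ∧ (a : ℕ) + 1 < n) ∨
      ((p a : ℕ) = a - 1 ∧ ((a : ℕ) - m) % 2 = 1) ∨
      ((p a : ℕ) = a ∧ ((a : ℕ) - m) % 2 = 0 ∧ n ≤ (a : ℕ) + 1) := by
    refine ⟨fun a =>
      if h : m ≤ (a : ℕ) ∧ ((a : ℕ) - m) % 2 = 0 ∧ (a : ℕ) + 1 < n then ⟨a + 1, h.2.2⟩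
      else if m ≤ (a : ℕ) ∧ ((a : ℕ) - m) % 2 = 1 then ⟨a - 1, by omega⟩ else a,
      fun a ha => ?_⟩
    dsimp only
    split_ifs <;> simp only [true_and] <;> omega
  have hpm : ∀ a : Fin n, m ≤ (a : ℕ) → m ≤ (p a : ℕ) := fun a ha => by
    rcases hp a ha with h | h | h <;> omega
  refine ⟨p, ⟨fun a ha => ?_, fun a ha => ?_, fun a b => ?_⟩,
    card_le_one.2 fun a ha b hb => ?_⟩
  · simp only [mem_filter, mem_univ, true_and, not_lt] at ha ⊢
    exact hpm a ha
  · simp only [mem_filter, mem_univ, true_and, not_lt] at ha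
    ext
    rcases hp a ha with h | h | h <;> rcases hp (p a) (hpm a ha) with h' | h' | h' <;> omega
  · show a ≠ b ∧ _ ↔ _
    simp only [mem_filter, mem_univ, true_and, ne_eq, Fin.ext_iff]
    rcases lt_or_ge (a : ℕ) m with ha | ha
    · omega
    · rcases hp a ha with h | h | h <;> omega
  · simp only [unmatched, mem_filter, mem_compl, mem_univ, true_and, not_lt] at ha hb
    rcases hp a ha.1 with h | h | h <;> rcases hp b hb.1 with h' | h' | h' <;>
      simp only [ha.2, hb.2] at h h' <;> ext <;> omega

end CliqueMatching

section Extremal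

variable {V : Type*} {G : SimpleGraph V} {C : Finset V}

theorem exists_partner (hclosed : ∀ u ∈ C, ∀ v, G.Adj u v → v ∈ C)
    (huniq : ∀ v ∉ C, ∀ x y, G.Adj v x → G.Adj v y → x = y) :
    ∃ p : V → V, (∀ v ∉ C, p v ∉ C) ∧ (∀ v ∉ C, p (p v) = v) ∧
      ∀ v ∉ C, ∀ w, G.Adj v w ↔ v ≠ w ∧ w = p v := by
  classical
  let p : V → V := fun v => if h : ∃ w, G.Adj v w then h.choose else v
  have hadj : ∀ v ∉ C, ∀ w, G.Adj v w ↔ v ≠ w ∧ w = p v := by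
    intro v hv w
    by_cases h : ∃ w, G.Adj v w
    · have hp : p v = h.choose := dif_pos h
      refine ⟨fun hw => ⟨hw.ne, hp ▸ huniq v hv _ _ hw h.choose_spec⟩, ?_⟩
      rintro ⟨-, rfl⟩
      exact hp ▸ h.choose_spec
    · have hp : p v = v := dif_neg h
      simp only [not_exists] at h
      simp [h w, hp, eq_comm]
  have hmaps : ∀ v ∉ C, p v ∉ C := by
    intro v hv hpv
    by_cases h : p v = v
    · exact hv (h ▸ hpv)
    · exact hv (hclosed _ hpv v ((hadj v hv _).2 ⟨Ne.symm h, rfl⟩).symm)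
  refine ⟨p, hmaps, fun v hv => ?_, hadj⟩
  by_cases h : p v = v
  · rw [h, h]
  · have hvp := (hadj v hv _).2 ⟨Ne.symm h, rfl⟩
    exact (((hadj _ (hmaps v hv) v).1 hvp.symm).2).symm

variable [Fintype V] [DecidableEq V] [DecidableRel G.Adj]

theorem degree_le_of_closed (hclosed : ∀ u ∈ C, ∀ v, G.Adj u v → v ∈ C) {u : V}
    (hu : u ∈ C) : G.degree u ≤ #C - 1 := by
  rw [← card_neighborFinset_eq_degree,
    ← inter_eq_left.2 fun v hv => hclosed u hu v ((mem_neighborFinset ..).1 hv)]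
  exact card_neighborFinset_inter_le hu

theorem adj_of_sum_degree (hclosed : ∀ u ∈ C, ∀ v, G.Adj u v → v ∈ C)
    (hsum : #C * (#C - 1) ≤ ∑ v ∈ C, G.degree v) {u v : V} (hu : u ∈ C) (hv : v ∈ C)
    (huv : u ≠ v) : G.Adj u v := by
  have hdeg : ∀ w ∈ C, G.degree w = #C - 1 := by
    refine (sum_eq_sum_iff_of_le fun w hw => degree_le_of_closed hclosed hw).1 ?_
    exact le_antisymm (sum_le_sum fun w hw => degree_le_of_closed hclosed hw)
      (by simpa using hsum)
  have hN : G.neighborFinset u = C.erase u := by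
    refine eq_of_subset_of_card_le (fun w hw => ?_) ?_
    · rw [mem_neighborFinset] at hw
      exact mem_erase.2 ⟨hw.ne', hclosed u hu w hw⟩
    · rw [card_erase_of_mem hu, card_neighborFinset_eq_degree, hdeg u hu]
  rw [← mem_neighborFinset, hN]
  exact mem_erase.2 ⟨huv.symm, hv⟩

theorem sum_degree_compl_add_card_unmatched {p : V → V}
    (hadj : ∀ v ∉ C, ∀ w, G.Adj v w ↔ v ≠ w ∧ w = p v) :
    ∑ v ∈ Cᶜ, G.degree v + #(unmatched C p) = #Cᶜ := by
  have hdeg : ∀ v ∈ Cᶜ, G.degree v = if p v = v then 0 else 1 := by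
    intro v hv
    rw [← card_neighborFinset_eq_degree]
    split_ifs with h
    · simp [neighborFinset_eq_filter, hadj v (mem_compl.1 hv), h, eq_comm]
    · rw [card_eq_one]
      refine ⟨p v, ext fun w => ?_⟩
      rw [mem_neighborFinset, hadj v (mem_compl.1 hv), mem_singleton]
      exact ⟨And.right, fun hw => ⟨hw ▸ Ne.symm h, hw⟩⟩
  rw [sum_congr rfl hdeg, sum_ite, sum_const_zero, sum_const, smul_eq_mul, mul_one, zero_add,
    unmatched, add_comm]
  exact card_filter_add_card_filter_not _

end Extremal

theorem nonempty_iso_compPlusMatching_of_closed {n : ℕ} {G : SimpleGraph (Fin n)}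
    [DecidableRel G.Adj] {C : Finset (Fin n)} (hclosed : ∀ u ∈ C, ∀ v, G.Adj u v → v ∈ C)
    (huniq : ∀ v ∉ C, ∀ x y, G.Adj v x → G.Adj v y → x = y)
    (he : (#C).choose 2 + (n - #C) / 2 ≤ #G.edgeFinset) :
    Nonempty (G ≃g compPlusMatching n #C) := by
  obtain ⟨p, hmaps, hinv, hadj⟩ := exists_partner hclosed huniq
  have hcard := card_eq_add_card_pairBlocks_add_card_unmatched hmaps hinv
  have hout := sum_degree_compl_add_card_unmatched hadj
  have hin : ∑ v ∈ C, G.degree v ≤ #C * (#C - 1) := by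
    simpa using sum_le_card_nsmul C _ _ fun v hv => degree_le_of_closed hclosed hv
  have htotal := sum_add_sum_compl C fun v => G.degree v
  have hchoose : 2 * (#C).choose 2 = #C * (#C - 1) := by
    rw [Nat.choose_two_right, Nat.mul_div_cancel' (Nat.even_mul_pred_self _).two_dvd]
  rw [sum_degrees_eq_twice_card_edges] at htotal
  rw [card_compl, Fintype.card_fin] at hout
  rw [Fintype.card_fin] at hcard
  have hU : #(unmatched C p) ≤ 1 := by omega
  have hclique : #C * (#C - 1) ≤ ∑ v ∈ C, G.degree v := by omega
  obtain ⟨q, hK, hUK⟩ := exists_isCliqueMatching_compPlusMatching n #C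
  refine nonempty_iso_of_isCliqueMatching ⟨hmaps, hinv, fun u v => ?_⟩ hK hU hUK ?_ rfl
  · by_cases hu : u ∈ C
    · refine ⟨fun h => ⟨h.ne, .inl ⟨hu, hclosed u hu v h⟩⟩, ?_⟩
      rintro ⟨huv, ⟨-, hv⟩ | ⟨hu', -⟩⟩
      exacts [adj_of_sum_degree hclosed hclique hu hv huv, absurd hu hu']
    · simp [hadj u hu, hu]
  · rw [Fin.card_filter_val_lt, min_eq_right (by simpa using card_le_univ C)]

theorem IsCycleMap.nonempty_iso_compPlusMatching {n l : ℕ} {G : SimpleGraph (Fin n)}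
    [DecidableRel G.Adj] {c : ℕ → Fin n} (hc : IsCycleMap G (2 * l + 3) c)
    (hT : ¬ ContainsSub G (pathUnion 2 ![2 * l + 1, 3]))
    (he : (2 * l + 3).choose 2 + (n - (2 * l + 3)) / 2 ≤ #G.edgeFinset) :
    Nonempty (G ≃g compPlusMatching n (2 * l + 3)) := by
  have hmem : ∀ {v}, v ∈ (range (2 * l + 3)).image c ↔ v ∈ Set.range c :=
    hc.mem_image_range_iff (by omega)
  have hclosed : ∀ u ∈ (range (2 * l + 3)).image c, ∀ v, G.Adj u v →
      v ∈ (range (2 * l + 3)).image c := by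
    intro u hu v huv
    obtain ⟨i, rfl⟩ := hmem.1 hu
    exact hmem.2 (hc.mem_range_of_adj_apply hT le_rfl huv)
  have hout : ∀ v ∉ (range (2 * l + 3)).image c, ∀ x, G.Adj v x → x ∉ Set.range c :=
    fun v hv x hvx hx => hv (hclosed x (hmem.2 hx) v hvx.symm)
  rw [← hc.card_image_range] at he ⊢
  refine nonempty_iso_compPlusMatching_of_closed hclosed (fun v hv x y hx hy => ?_) he
  exact hc.eq_of_adj_of_notMem_range hT (by omega) (fun h => hv (hmem.2 h)) (hout v hv x hx)
    (hout v hv y hy) hx hy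

theorem IsCycleMap.mem_neighborFinset_sdiff_iff {V : Type*} [Fintype V] [DecidableEq V]
    {G : SimpleGraph V} [DecidableRel G.Adj] {m : ℕ} {c : ℕ → V} (hc : IsCycleMap G m c)
    (hm : 0 < m) {v w : V} :
    w ∈ G.neighborFinset v \ (range m).image c ↔ G.Adj v w ∧ w ∉ Set.range c := by
  rw [mem_sdiff, mem_neighborFinset, hc.mem_image_range_iff hm]

theorem IsCycleMap.sum_card_neighborFinset_sdiff_le {V : Type*} [Fintype V] [DecidableEq V]
    {G : SimpleGraph V} [DecidableRel G.Adj] {a k : ℕ} {c : ℕ → V}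
    (hc : IsCycleMap G (2 * a) c) (hT : ¬ ContainsSub G (pathUnion 2 ![k, 3]))
    (hk : k + 1 ≤ 2 * a) (hC : ¬ ContainsSub G (cycleGraph (2 * a + 1))) :
    ∑ v ∈ (range (2 * a)).image c, #(G.neighborFinset v \ (range (2 * a)).image c) ≤ a := by
  have hout := fun {v w : V} => hc.mem_neighborFinset_sdiff_iff (v := v) (w := w) (by omega)
  rw [sum_image fun i hi j hj h => hc.injOn_range hi hj h]
  refine sum_range_two_mul_le (fun i => card_le_one.2 fun x hx y hy => ?_) (fun i hi => ?_) a
  · exact hc.eq_of_adj_apply_of_notMem_range hT hk (hout.1 hx).2 (hout.1 hy).2 (hout.1 hx).1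
      (hout.1 hy).1
  · obtain ⟨u, hu⟩ := card_pos.1 (Nat.pos_of_ne_zero hi)
    refine card_eq_zero.2 (eq_empty_of_forall_notMem fun v hv => ?_)
    obtain rfl := hc.eq_of_adj_apply_of_adj_apply_succ hT hk (hout.1 hu).2 (hout.1 hv).2
      (hout.1 hu).1 (hout.1 hv).1
    exact hC (hc.containsSub_cycleGraph_succ (by omega) (hout.1 hu).2 (hout.1 hu).1 (hout.1 hv).1)

theorem IsCycleMap.card_edgeFinset_lt {V : Type*} [Fintype V] [DecidableEq V]
    {G : SimpleGraph V} [DecidableRel G.Adj] {l : ℕ} {c : ℕ → V} (hl : 1 ≤ l)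
    (hc : IsCycleMap G (2 * (l + 1)) c) (hT : ¬ ContainsSub G (pathUnion 2 ![2 * l + 1, 3]))
    (hC : ¬ ContainsSub G (cycleGraph (2 * (l + 1) + 1))) :
    #G.edgeFinset < (2 * l + 3).choose 2 + (Fintype.card V - (2 * l + 3)) / 2 := by
  have hcross := hc.sum_card_neighborFinset_sdiff_le hT (by omega) hC
  have hbound := two_mul_card_edgeFinset_le ((range (2 * (l + 1))).image c)
    fun v hv => card_le_one.2 fun x hx y hy => by
      rw [hc.mem_neighborFinset_sdiff_iff (by omega)] at hx hy
      exact hc.eq_of_adj_of_notMem_range hT (by omega)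
        (fun h => hv ((hc.mem_image_range_iff (by omega)).2 h)) hx.2 hy.2 hx.1 hy.1
  have hcard : 2 * (l + 1) ≤ Fintype.card V := hc.card_image_range ▸ card_le_univ _
  have hchoose : (2 * l + 3).choose 2 = (2 * l + 3) * (l + 1) := by
    rw [Nat.choose_two_right, show 2 * l + 3 - 1 = (l + 1) * 2 by omega, ← mul_assoc,
      Nat.mul_div_cancel _ two_pos]
  have hprod : 2 * ((2 * l + 3) * (l + 1)) = 2 * (l + 1) * (2 * l + 1) + 4 * l + 4 := by ring
  rw [hc.card_image_range, show 2 * (l + 1) - 1 = 2 * l + 1 by omega] at hbound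
  omega

end SimpleGraph

theorem statement11_general (l n : ℕ) (hl : 2 ≤ l)
    (G : SimpleGraph (Fin n))
    (hne : ¬ Nonempty (G ≃g compPlusMatching n (2 * l + 3)))
    (he : Nat.choose (2 * l + 3) 2 + (n - (2 * l + 3)) / 2 ≤ G.edgeSet.ncard)
    (hcyc : ContainsSub G (SimpleGraph.cycleGraph (2 * l + 2)) ∨
        ContainsSub G (SimpleGraph.cycleGraph (2 * l + 3))) :
    ContainsSub G (pathUnion 2 ![2 * l + 1, 3]) := by
  classical
  rw [← coe_edgeFinset, Set.ncard_coe_finset] at he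
  by_contra hT
  have hodd : ¬ ContainsSub G (cycleGraph (2 * l + 3)) := fun h => by
    obtain ⟨c, hc⟩ := exists_isCycleMap (by omega) h
    exact hne (hc.nonempty_iso_compPlusMatching hT he)
  obtain ⟨c, hc⟩ := exists_isCycleMap (by omega) (hcyc.resolve_right hodd)
  exact (hc.card_edgeFinset_lt (by omega) hT hodd).not_ge (by simpa using he)

theorem statement11 (l n : ℕ) (hl : 2 ≤ l) (hn : 2 * l + 3 ≤ n)
    (G : SimpleGraph (Fin n))
    (hne : ¬ Nonempty (G ≃g compPlusMatching n (2 * l + 3)))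
    (he : Nat.choose (2 * l + 3) 2 + (n - (2 * l + 3)) / 2 ≤ G.edgeSet.ncard)
    (hcyc : ContainsSub G (SimpleGraph.cycleGraph (2 * l + 2)) ∨
        ContainsSub G (SimpleGraph.cycleGraph (2 * l + 3))) :
    ContainsSub G (pathUnion 2 ![2 * l + 1, 3]) :=
  statement11_general l n hl G hne he hcyc
end

section
/- Let k_1 ≥ k_m ≥ 3 be integers with at most one of k_1, k_m odd, and let n ≥ k_1 + k_m. Then max{ C(k_1+k_m-2,2) + n - k_1 - k_m + 2, [n, k_1+k_m] } ≤ max{ [n, k_1+k_m, k_m], [n, k_1+k_m] }. -/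
/-!
Write `m = k₁ + k_m`; the first term is `C(m-1,2) + (n-m+1) - (m-3)`, so it suffices that one of
the right-hand quantities exceeds `C(m-1,2)` by at least `(n-m+1) - (m-3)`. If `k_m ≥ 4`, the
blocks of size `k_m - 1 ≥ 3` in `[n,m,k_m]` each contain at least as many edges as vertices, so
`[n,m,k_m]` exceeds `C(m-1,2)` by at least `n-m`. If `k_m = 3`, then `k₁` is even and `m` odd;
`[n,m,3]` gains only `⌊(n-m+1)/2⌋`, which suffices while `n ≤ 3m-7`, and beyond that the slope
`(m-3)/2` of `[n,m]` in `n` wins.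
-/

open SimpleGraph Finset

theorem Nat.choose_two_succ (e : ℕ) : (e + 1).choose 2 = e.choose 2 + e := by
  rw [Nat.choose_succ_succ', Nat.choose_one_right, Nat.add_comm]

theorem Nat.le_choose_two_add_one (r : ℕ) : r ≤ r.choose 2 + 1 := by
  cases r with
  | zero => simp
  | succ r => rw [Nat.choose_two_succ]; omega

theorem Nat.le_choose_two {d : ℕ} (hd : 3 ≤ d) : d ≤ d.choose 2 := by
  obtain ⟨e, rfl⟩ : ∃ e, d = e + 1 := ⟨d - 1, by omega⟩
  have : 0 < e.choose 2 := Nat.choose_pos (by omega)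
  rw [Nat.choose_two_succ]
  omega

theorem Nat.le_div_mul_choose_two_add_choose_two {d : ℕ} (hd : 3 ≤ d) (N : ℕ) :
    N ≤ N / d * d.choose 2 + (N % d).choose 2 + 1 := by
  have hsplit := Nat.div_add_mod' N d
  have hblocks : N / d * d ≤ N / d * d.choose 2 := Nat.mul_le_mul_left _ (Nat.le_choose_two hd)
  have hrem := Nat.le_choose_two_add_one (N % d)
  omega

theorem brkt3_of_lt {n m : ℕ} (l : ℕ) (h : m - 1 < n) :
    brkt3 n m l = (m - 1).choose 2 + (n - (m - 1)) / (l - 1) * (l - 1).choose 2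
      + ((n - (m - 1)) % (l - 1)).choose 2 :=
  if_neg (Nat.not_le.mpr h)

theorem choose_sub_one_two {m : ℕ} (hm : 2 ≤ m) :
    (m - 1).choose 2 = (m - 2).choose 2 + (m - 2) := by
  rw [show m - 1 = m - 2 + 1 by omega, Nat.choose_two_succ]

theorem choose_sub_two_add_le_brkt3 {n m l : ℕ} (hm : 4 ≤ m) (hl : 4 ≤ l) (hn : m ≤ n) :
    (m - 2).choose 2 + (n - m) + 2 ≤ brkt3 n m l := by
  rw [brkt3_of_lt l (by omega), choose_sub_one_two (by omega)]
  have := Nat.le_div_mul_choose_two_add_choose_two (d := l - 1) (by omega) (n - (m - 1))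
  omega

theorem choose_sub_two_add_le_brkt3_three {n m : ℕ} (hm : m ≤ n) (hn : n + 7 ≤ 3 * m) :
    (m - 2).choose 2 + (n - m) + 2 ≤ brkt3 n m 3 := by
  rw [brkt3_of_lt 3 (by omega), choose_sub_one_two (by omega)]
  have hrem : ((n - (m - 1)) % 2).choose 2 = 0 :=
    Nat.choose_eq_zero_of_lt (Nat.mod_lt _ two_pos)
  simp only [show 3 - 1 = 2 from rfl, Nat.choose_self, mul_one, hrem]
  omega

theorem choose_sub_two_add_le_brkt2 {n m : ℕ} (hodd : Odd m) (hm : 7 ≤ m)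
    (hn : 3 * m ≤ n + 6) :
    (m - 2).choose 2 + (n - m) + 2 ≤ brkt2 n m := by
  -- writing `m = 2p + 7`, `n = 6p + 15 + s` removes every truncated subtraction and floor
  obtain ⟨q, rfl⟩ := hodd
  obtain ⟨p, rfl⟩ : ∃ p, q = p + 3 := ⟨q - 3, by omega⟩
  obtain ⟨s, rfl⟩ : ∃ s, n = 6 * p + 15 + s := ⟨n - (6 * p + 15), by omega⟩
  unfold brkt2
  rw [show 2 * (p + 3) + 1 - 2 = 2 * p + 5 by omega, show (2 * (p + 3) + 1) / 2 = p + 3 by omega,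
    show p + 3 - 1 = p + 2 by omega, show (2 * p + 5) / 2 = p + 2 by omega,
    show 6 * p + 15 + s - (2 * (p + 3) + 1) = 4 * p + 8 + s by omega,
    show 6 * p + 15 + s - (p + 3) + 1 = 5 * p + 13 + s by omega]
  qify
  rw [Nat.cast_choose_two, Nat.cast_choose_two]
  push_cast
  nlinarith [mul_nonneg (Nat.cast_nonneg (α := ℚ) p) (Nat.cast_nonneg (α := ℚ) s)]

theorem statement13 (k1 km n : ℕ) (h1 : km ≤ k1) (h3 : 3 ≤ km)
    (hodd : ¬ (Odd k1 ∧ Odd km)) (hn : k1 + km ≤ n) :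
    max (Nat.choose (k1 + km - 2) 2 + (n - k1 - km) + 2) (brkt2 n (k1 + km)) ≤
      max (brkt3 n (k1 + km) km) (brkt2 n (k1 + km)) := by
  refine max_le ?_ (le_max_right _ _)
  rw [Nat.sub_sub]
  rcases (show 4 ≤ km ∨ km = 3 by omega) with hkm | rfl
  · exact le_max_of_le_left (choose_sub_two_add_le_brkt3 (by omega) hkm hn)
  obtain ⟨j, rfl⟩ : Even k1 := Nat.not_odd_iff_even.mp fun h => hodd ⟨h, by decide⟩
  by_cases hsmall : n + 7 ≤ 3 * (j + j + 3)
  · exact le_max_of_le_left (choose_sub_two_add_le_brkt3_three hn hsmall)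
  · exact le_max_of_le_right
      (choose_sub_two_add_le_brkt2 ⟨j + 1, by ring⟩ (by omega) (by omega))
end

section
/- Let k_1 ≥ k_m ≥ 3 be integers with at most one of k_1, k_m odd, and let n_1 ≥ k_1 and n_2 ≥ 0. Then [n_1, k_1+k_m, k_m] + [n_2, k_m, k_m] ≤ [n_1+n_2, k_1+k_m, k_m]. -/
/-!
Write `g_L(x)` for the number of edges of a disjoint union of `⌊x/L⌋` copies of `K_L` and one
`K_{x mod L}`. Then `[n,l,l] = g_{l-1}(n)` and `[n,m,l] = C(min(n, m-1), 2) + g_{l-1}(n ∸ (m-1))`.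
Adding `L` vertices to `g_L` adds exactly one `K_L`; this reduces superadditivity of `g_L` (the case
`n ≥ m-1`) to `x, y ≤ L`, and shows that one more vertex adds at most `L - 1` edges. When
`n < m-1`, move `e = min(k, m-1-n)` vertices from the `g_{l-1}(k)` part into the clique on `n`
vertices: they lose at most `e(l-2)` edges there and gain at least `ne ≥ e(l-2)` in the clique.
-/

open SimpleGraph Finset

theorem Nat.choose_two_add (x y : ℕ) : (x + y).choose 2 = x.choose 2 + x * y + y.choose 2 := by
  induction y with
  | zero => simp
  | succ y ih =>
    rw [← add_assoc, Nat.choose_succ_succ', ih, Nat.choose_succ_succ' y, Nat.choose_one_right,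
      Nat.choose_one_right]
    ring

def cliqueUnionEdges (L n : ℕ) : ℕ := n / L * L.choose 2 + (n % L).choose 2

section cliqueUnionEdges

variable {L : ℕ}

theorem cliqueUnionEdges_of_le {n : ℕ} (h : n ≤ L) : cliqueUnionEdges L n = n.choose 2 := by
  rcases h.lt_or_eq with h | rfl
  · simp [cliqueUnionEdges, Nat.div_eq_of_lt h, Nat.mod_eq_of_lt h]
  · rcases Nat.eq_zero_or_pos n with rfl | hn
    · rfl
    · simp [cliqueUnionEdges, Nat.div_self hn]

theorem cliqueUnionEdges_zero : cliqueUnionEdges L 0 = 0 :=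
  cliqueUnionEdges_of_le (Nat.zero_le L)

theorem cliqueUnionEdges_add_self (hL : 0 < L) (n : ℕ) :
    cliqueUnionEdges L (n + L) = cliqueUnionEdges L n + L.choose 2 := by
  rw [cliqueUnionEdges, cliqueUnionEdges, Nat.add_div_right _ hL, Nat.add_mod_right]
  ring

theorem cliqueUnionEdges_add_cliqueUnionEdges_le (hL : 0 < L) (a b : ℕ) :
    cliqueUnionEdges L a + cliqueUnionEdges L b ≤ cliqueUnionEdges L (a + b) := by
  induction a using Nat.strong_induction_on generalizing b with
  | _ a iha =>
  by_cases ha : L ≤ a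
  · obtain ⟨a, rfl⟩ := Nat.exists_eq_add_of_le' ha
    have := iha a (by omega) b
    rw [cliqueUnionEdges_add_self hL, show a + L + b = a + b + L by ring,
      cliqueUnionEdges_add_self hL]
    omega
  induction b using Nat.strong_induction_on with
  | _ b ihb =>
  by_cases hb : L ≤ b
  · obtain ⟨b, rfl⟩ := Nat.exists_eq_add_of_le' hb
    have := ihb b (by omega)
    rw [cliqueUnionEdges_add_self hL, show a + (b + L) = a + b + L by ring,
      cliqueUnionEdges_add_self hL]
    omega
  rw [cliqueUnionEdges_of_le (by omega : a ≤ L), cliqueUnionEdges_of_le (by omega : b ≤ L)]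
  by_cases hab : a + b ≤ L
  · rw [cliqueUnionEdges_of_le hab, Nat.choose_two_add]
    omega
  -- write `a + b = s + L` with `b = s + t` and `L = a + t`; the claim reduces to `s * t ≤ a * t`
  obtain ⟨s, t, rfl, rfl⟩ : ∃ s t, b = s + t ∧ L = a + t := ⟨a + b - L, L - a, by omega, by omega⟩
  rw [show a + (s + t) = s + (a + t) by ring, cliqueUnionEdges_add_self hL,
    cliqueUnionEdges_of_le (by omega), Nat.choose_two_add s, Nat.choose_two_add a]
  have : s * t ≤ a * t := Nat.mul_le_mul_right t (by omega)
  omega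

theorem cliqueUnionEdges_succ_le (hL : 0 < L) (n : ℕ) :
    cliqueUnionEdges L (n + 1) ≤ cliqueUnionEdges L n + (L - 1) := by
  induction n using Nat.strong_induction_on with
  | _ n ih =>
  by_cases hn : L ≤ n
  · obtain ⟨n, rfl⟩ := Nat.exists_eq_add_of_le' hn
    have := ih n (by omega)
    rw [show n + L + 1 = n + 1 + L by ring, cliqueUnionEdges_add_self hL,
      cliqueUnionEdges_add_self hL]
    omega
  · rw [cliqueUnionEdges_of_le (by omega : n + 1 ≤ L), cliqueUnionEdges_of_le (by omega : n ≤ L),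
      Nat.choose_two_add]
    have : Nat.choose 1 2 = 0 := rfl
    omega

theorem cliqueUnionEdges_add_le (hL : 0 < L) (n d : ℕ) :
    cliqueUnionEdges L (n + d) ≤ cliqueUnionEdges L n + d * (L - 1) := by
  induction d with
  | zero => simp
  | succ d ih =>
    have := cliqueUnionEdges_succ_le hL (n + d)
    rw [← add_assoc, add_one_mul]
    omega

end cliqueUnionEdges

theorem brkt3_eq_choose_min_add (n m l : ℕ) :
    brkt3 n m l = (min n (m - 1)).choose 2 + cliqueUnionEdges (l - 1) (n - (m - 1)) := by
  rw [brkt3, cliqueUnionEdges]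
  split_ifs with h
  · simp [min_eq_left h, Nat.sub_eq_zero_of_le h]
  · rw [min_eq_right (by omega)]
    ring

theorem brkt3_self {l : ℕ} (hl : 2 ≤ l) (n : ℕ) : brkt3 n l l = cliqueUnionEdges (l - 1) n := by
  rw [brkt3_eq_choose_min_add]
  rcases le_or_gt n (l - 1) with h | h
  · rw [min_eq_left h, Nat.sub_eq_zero_of_le h, cliqueUnionEdges_zero, cliqueUnionEdges_of_le h]
    rfl
  · obtain ⟨n, rfl⟩ := Nat.exists_eq_add_of_le' h.le
    rw [min_eq_right h.le, Nat.add_sub_cancel, cliqueUnionEdges_add_self (by omega)]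
    ring

theorem brkt3_add_brkt3_self_le {n m l : ℕ} (hl : 2 ≤ l) (hn : l - 2 ≤ n) (k : ℕ) :
    brkt3 n m l + brkt3 k l l ≤ brkt3 (n + k) m l := by
  rw [brkt3_self hl, brkt3_eq_choose_min_add, brkt3_eq_choose_min_add]
  have hL : 0 < l - 1 := by omega
  rcases le_or_gt (m - 1) n with hM | hM
  · rw [min_eq_right hM, min_eq_right (by omega), show n + k - (m - 1) = n - (m - 1) + k by omega]
    have := cliqueUnionEdges_add_cliqueUnionEdges_le hL (n - (m - 1)) k
    omega
  · set e := min k (m - 1 - n)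
    rw [min_eq_left hM.le, Nat.sub_eq_zero_of_le hM.le, cliqueUnionEdges_zero,
      show min (n + k) (m - 1) = n + e by omega, show n + k - (m - 1) = k - e by omega]
    calc n.choose 2 + 0 + cliqueUnionEdges (l - 1) k
        ≤ n.choose 2 + (cliqueUnionEdges (l - 1) (k - e) + e * (l - 1 - 1)) := by
          have := cliqueUnionEdges_add_le hL (k - e) e
          rw [Nat.sub_add_cancel (by omega : e ≤ k)] at this
          omega
      _ ≤ n.choose 2 + (cliqueUnionEdges (l - 1) (k - e) + e * n) := by
          gcongr
          omega
      _ ≤ (n + e).choose 2 + cliqueUnionEdges (l - 1) (k - e) := by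
          rw [Nat.choose_two_add, Nat.mul_comm e]
          omega

theorem statement14_general (k1 km n1 n2 : ℕ) (h1 : km ≤ k1) (h3 : 3 ≤ km)
    (hn1 : k1 ≤ n1) :
    brkt3 n1 (k1 + km) km + brkt3 n2 km km ≤ brkt3 (n1 + n2) (k1 + km) km :=
  brkt3_add_brkt3_self_le (by omega) (by omega) n2

theorem statement14 (k1 km n1 n2 : ℕ) (h1 : km ≤ k1) (h3 : 3 ≤ km)
    (hodd : ¬ (Odd k1 ∧ Odd km)) (hn1 : k1 ≤ n1) :
    brkt3 n1 (k1 + km) km + brkt3 n2 km km ≤ brkt3 (n1 + n2) (k1 + km) km :=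
  statement14_general k1 km n1 n2 h1 h3 hn1
end

section
/- Let k_1 ≥ k_2 ≥ k_m ≥ 3 be integers with at most one of k_1, k_2, k_m odd, and let n_1 ≥ k_1 + k_m and n_2 ≥ k_2 + k_m. Then [n_1, k_1+k_m] + [n_2, k_2+k_m] < [n_1+n_2, k_1+k_2+k_m]. -/
open SimpleGraph Finset

/-!
With `h = ⌊m/2⌋` one has `2·[n, m] = (h - 1)(2n - h)`. For fixed `n` this is increasing in `h`
as long as `h ≤ n`, so the right-hand side is at least its value at `h = max h₁ h₂ + 1`, and
there the difference to the left-hand side is visibly positive.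
-/

/-- Twice the bracket `[n, m]`, as a function of `h = ⌊m/2⌋` (see `two_mul_brkt2`). -/
def twiceBrkt (h n : ℤ) : ℤ := (h - 1) * (2 * n - h)

lemma twiceBrkt_sub_twiceBrkt (c d n : ℤ) :
    twiceBrkt c n - twiceBrkt d n = (c - d) * (2 * n + 1 - c - d) := by
  unfold twiceBrkt
  ring

lemma twiceBrkt_mono {c d n : ℤ} (hdc : d ≤ c) (hcn : c ≤ n) :
    twiceBrkt d n ≤ twiceBrkt c n := by
  rw [← sub_nonneg, twiceBrkt_sub_twiceBrkt]
  exact mul_nonneg (by linarith) (by linarith)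

lemma twiceBrkt_add_lt_succ {a b n₁ n₂ : ℤ} (hb : 1 ≤ b) (hba : b ≤ a) (hn₁ : a ≤ n₁)
    (hn₂ : b ≤ n₂) : twiceBrkt a n₁ + twiceBrkt b n₂ < twiceBrkt (a + 1) (n₁ + n₂) := by
  have gap : twiceBrkt (a + 1) (n₁ + n₂) - twiceBrkt a n₁ - twiceBrkt b n₂
      = 2 * n₂ * (a - b + 1) + 2 * (n₁ - a) + b * (b - 1) := by
    unfold twiceBrkt
    ring
  have : 0 < 2 * n₂ * (a - b + 1) := mul_pos (by omega) (by omega)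
  nlinarith

lemma twiceBrkt_add_lt {a b c n₁ n₂ : ℤ} (ha : 1 ≤ a) (hb : 1 ≤ b) (hac : a < c) (hbc : b < c)
    (hn₁ : a ≤ n₁) (hn₂ : b ≤ n₂) (hn : c ≤ n₁ + n₂) :
    twiceBrkt a n₁ + twiceBrkt b n₂ < twiceBrkt c (n₁ + n₂) := by
  rcases le_total b a with hba | hab
  · exact (twiceBrkt_add_lt_succ hb hba hn₁ hn₂).trans_le
      (twiceBrkt_mono hac (by omega))
  · rw [add_comm, add_comm n₁]
    exact (twiceBrkt_add_lt_succ ha hab hn₂ hn₁).trans_le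
      (twiceBrkt_mono hbc (by omega))

lemma two_mul_choose_two (a : ℕ) : 2 * (a.choose 2 : ℤ) = a * (a - 1) := by
  have h : (2 * (a.choose 2 : ℤ) : ℚ) = (a * (a - 1) : ℤ) := by
    push_cast
    rw [Nat.cast_choose_two]
    ring
  exact_mod_cast h

lemma two_mul_brkt2 {n m : ℕ} (hm : 2 ≤ m) (hn : m / 2 ≤ n) :
    2 * (brkt2 n m : ℤ) = twiceBrkt (m / 2 : ℕ) n := by
  obtain ⟨h, hh⟩ : ∃ h, m / 2 = h + 1 := ⟨m / 2 - 1, by omega⟩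
  obtain ⟨b, rfl⟩ : ∃ b, n = h + 1 + b := ⟨n - (h + 1), by omega⟩
  have hm2 : (m - 2) / 2 = h := by omega
  rw [brkt2, twiceBrkt, hh, hm2, Nat.add_sub_cancel,
    show h + 1 + b - (h + 1) + 1 = b + 1 by omega]
  push_cast
  linear_combination two_mul_choose_two h

theorem brkt2_add_brkt2_lt {n₁ n₂ m₁ m₂ m : ℕ} (hm₁ : 2 ≤ m₁) (hm₂ : 2 ≤ m₂)
    (hlt₁ : m₁ / 2 < m / 2) (hlt₂ : m₂ / 2 < m / 2) (hn₁ : m₁ / 2 ≤ n₁) (hn₂ : m₂ / 2 ≤ n₂)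
    (hn : m / 2 ≤ n₁ + n₂) :
    brkt2 n₁ m₁ + brkt2 n₂ m₂ < brkt2 (n₁ + n₂) m := by
  have key := twiceBrkt_add_lt (a := (m₁ / 2 : ℕ)) (b := (m₂ / 2 : ℕ)) (c := (m / 2 : ℕ))
    (n₁ := n₁) (n₂ := n₂) (by omega) (by omega) (by omega) (by omega) (by omega) (by omega)
    (by omega)
  rw [← two_mul_brkt2 hm₁ hn₁, ← two_mul_brkt2 hm₂ hn₂, ← Nat.cast_add,
    ← two_mul_brkt2 (by omega) hn] at key
  omega

theorem statement16_general (k1 k2 km n1 n2 : ℕ) (h12 : k2 ≤ k1) (h2m : km ≤ k2) (h3 : 3 ≤ km)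
    (hn1 : k1 + km ≤ n1) (hn2 : k2 + km ≤ n2) :
    brkt2 n1 (k1 + km) + brkt2 n2 (k2 + km) < brkt2 (n1 + n2) (k1 + k2 + km) :=
  brkt2_add_brkt2_lt (by omega) (by omega) (by omega) (by omega) (by omega) (by omega) (by omega)

theorem statement16 (k1 k2 km n1 n2 : ℕ) (h12 : k2 ≤ k1) (h2m : km ≤ k2) (h3 : 3 ≤ km)
    (hodd : (if Odd k1 then 1 else 0) + (if Odd k2 then 1 else 0) +
        (if Odd km then 1 else 0) ≤ 1)
    (hn1 : k1 + km ≤ n1) (hn2 : k2 + km ≤ n2) :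
    brkt2 n1 (k1 + km) + brkt2 n2 (k2 + km) < brkt2 (n1 + n2) (k1 + k2 + km) :=
  statement16_general k1 k2 km n1 n2 h12 h2m h3 hn1 hn2
end
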